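/- Let (M, d) be a complete metric space with |M| ≥ 3 and λ ∈ (0,1). If F: M → CB(M) satisfies (i) for all u, v ∈ M, v ∈ Fu and u ≠ v implies u ∉ Fv, and (ii) 𝒟(Fx,Fy) + 𝒟(Fy,Fz) + 𝒟(Fz,Fx) ≤ λ·(d(x,y) + d(y,z) + d(z,x)) for all pairwise distinct x, y, z ∈ M, then F has a fixed point. -/
import Mathlib


/-- The joint diameter `𝒟(A,B) = sup_{(a,b) ∈ A × B} dist a b`. -/
noncomputable def jointDiam {M : Type*} [MetricSpace M] (A B : Set M) : ℝ :=
  sSup (Set.image2 dist A B)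

lemma dist_le_jointDiam {M : Type*} [MetricSpace M] {A B : Set M}
    (hA : Bornology.IsBounded A) (hB : Bornology.IsBounded B)
    {a b : M} (ha : a ∈ A) (hb : b ∈ B) : dist a b ≤ jointDiam A B := by
  apply le_csSup
  · obtain ⟨C, hC⟩ := Metric.isBounded_iff.mp (hA.union hB)
    refine ⟨C, ?_⟩
    rintro r ⟨p, hp, q, hq, rfl⟩
    exact hC (Set.mem_union_left _ hp) (Set.mem_union_right _ hq)
  · exact Set.mem_image2_of_mem ha hb

theorem stmt_15 {M : Type*} [MetricSpace M] [CompleteSpace M]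
    (hM : ∃ a b c : M, a ≠ b ∧ b ≠ c ∧ c ≠ a)
    (F : M → Set M)
    (hne : ∀ x, (F x).Nonempty) (hcl : ∀ x, IsClosed (F x))
    (hbd : ∀ x, Bornology.IsBounded (F x))
    (hi : ∀ u v : M, v ∈ F u → u ≠ v → u ∉ F v)
    (lam : ℝ) (hl0 : 0 < lam) (hl1 : lam < 1)
    (hcontr : ∀ x y z : M, x ≠ y → y ≠ z → z ≠ x →
      jointDiam (F x) (F y) + jointDiam (F y) (F z) + jointDiam (F z) (F x) ≤
        lam * (dist x y + dist y z + dist z x)) :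
    ∃ u : M, u ∈ F u := by
  by_contra hfix
  push_neg at hfix
  choose g hg using hne
  obtain ⟨a, -, -⟩ := hM
  set x : ℕ → M := fun n => g^[n] a with hx
  have hstep : ∀ n, x (n+1) = g (x n) := by
    intro n; simp [hx, Function.iterate_succ_apply']
  have hmem : ∀ n, x (n+1) ∈ F (x n) := by intro n; rw [hstep]; exact hg (x n)
  have hne1 : ∀ n, x n ≠ x (n+1) := by
    intro n h
    exact hfix (x n) (by nth_rewrite 2 [h]; exact hmem n)
  have hne2 : ∀ n, x n ≠ x (n+2) := by
    intro n h
    exact hi (x n) (x (n+1)) (hmem n) (hne1 n) (by rw [h]; exact hmem (n+1))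
  set t : ℕ → ℝ := fun n =>
    dist (x n) (x (n+1)) + dist (x (n+1)) (x (n+2)) + dist (x n) (x (n+2)) with ht
  have htstep : ∀ n, t (n+1) ≤ lam * t n := by
    intro n
    have h1 : dist (x (n+1)) (x (n+2)) ≤ jointDiam (F (x n)) (F (x (n+1))) :=
      dist_le_jointDiam (hbd _) (hbd _) (hmem n) (hmem (n+1))
    have h2 : dist (x (n+2)) (x (n+3)) ≤ jointDiam (F (x (n+1))) (F (x (n+2))) :=
      dist_le_jointDiam (hbd _) (hbd _) (hmem (n+1)) (hmem (n+2))
    have h3 : dist (x (n+1)) (x (n+3)) ≤ jointDiam (F (x (n+2))) (F (x n)) := by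
      rw [dist_comm]
      exact dist_le_jointDiam (hbd _) (hbd _) (hmem (n+2)) (hmem n)
    have hc := hcontr (x n) (x (n+1)) (x (n+2)) (hne1 n) (hne1 (n+1)) (Ne.symm (hne2 n))
    have hcomm : dist (x (n+2)) (x n) = dist (x n) (x (n+2)) := dist_comm _ _
    have hstep1 : t (n+1) ≤ jointDiam (F (x n)) (F (x (n+1))) +
        jointDiam (F (x (n+1))) (F (x (n+2))) + jointDiam (F (x (n+2))) (F (x n)) := by
      show dist (x (n+1)) (x (n+2)) + dist (x (n+2)) (x (n+3)) + dist (x (n+1)) (x (n+3)) ≤ _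
      linarith
    refine hstep1.trans (hc.trans (le_of_eq ?_))
    show lam * (dist (x n) (x (n+1)) + dist (x (n+1)) (x (n+2)) + dist (x (n+2)) (x n)) =
      lam * (dist (x n) (x (n+1)) + dist (x (n+1)) (x (n+2)) + dist (x n) (x (n+2)))
    rw [hcomm]
  have htn : ∀ n, t n ≤ t 0 * lam ^ n := by
    intro n
    induction n with
    | zero => simp
    | succ k ih =>
      calc t (k+1) ≤ lam * t k := htstep k
        _ ≤ lam * (t 0 * lam ^ k) := mul_le_mul_of_nonneg_left ih hl0.le
        _ = t 0 * lam ^ (k+1) := by ring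
  have hdist : ∀ n, dist (x n) (x (n+1)) ≤ t 0 * lam ^ n := by
    intro n
    have h1 := dist_nonneg (x := x (n+1)) (y := x (n+2))
    have h2 := dist_nonneg (x := x n) (y := x (n+2))
    have := htn n
    have htexp : t n = dist (x n) (x (n+1)) + dist (x (n+1)) (x (n+2)) +
        dist (x n) (x (n+2)) := rfl
    linarith [htexp ▸ this]
  have hcauchy : CauchySeq x := cauchySeq_of_le_geometric lam (t 0) hl1 hdist
  obtain ⟨u, hu⟩ := cauchySeq_tendsto_of_complete hcauchy
  have hfind : ∀ N : ℕ, ∃ m, N ≤ m ∧ x m ≠ u ∧ x (m+1) ≠ u := by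
    intro N
    by_cases h0 : x N = u
    · exact ⟨N+1, by omega, fun h => hne1 N (h0.trans h.symm),
        fun h => hne2 N (h0.trans h.symm)⟩
    · by_cases h1 : x (N+1) = u
      · exact ⟨N+2, by omega, fun h => hne1 (N+1) (h1.trans h.symm),
          fun h => hne2 (N+1) (h1.trans h.symm)⟩
      · exact ⟨N, le_refl _, h0, h1⟩
  have key : ∀ ε : ℝ, 0 < ε → dist u (g u) ≤ 5 * ε := by
    intro ε hε
    obtain ⟨N, hN⟩ := Metric.tendsto_atTop.mp hu ε hε
    obtain ⟨m, hmN, hm1, hm2⟩ := hfind N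
    have d1 : dist (x m) u < ε := hN m hmN
    have d2 : dist (x (m+1)) u < ε := hN _ (by omega)
    have d3 : dist (x (m+2)) u < ε := hN _ (by omega)
    have hc := hcontr (x m) (x (m+1)) u (hne1 m) hm2 (fun h => hm1 h.symm)
    have hA : dist (x (m+2)) (g u) ≤ jointDiam (F (x (m+1))) (F u) :=
      dist_le_jointDiam (hbd _) (hbd _) (hmem (m+1)) (hg u)
    have hB : (0:ℝ) ≤ jointDiam (F (x m)) (F (x (m+1))) :=
      le_trans dist_nonneg (dist_le_jointDiam (hbd _) (hbd _) (hmem m) (hmem (m+1)))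
    have hC : (0:ℝ) ≤ jointDiam (F u) (F (x m)) :=
      le_trans dist_nonneg (dist_le_jointDiam (hbd _) (hbd _) (hg u) (hmem m))
    have hS : dist (x m) (x (m+1)) + dist (x (m+1)) u + dist u (x m) ≤ 4 * ε := by
      have ht1 := dist_triangle (x m) u (x (m+1))
      have e1 : dist u (x (m+1)) = dist (x (m+1)) u := dist_comm _ _
      have e2 : dist u (x m) = dist (x m) u := dist_comm _ _
      linarith
    have hlS := mul_le_mul_of_nonneg_left hS hl0.le
    have h4 : dist (x (m+2)) (g u) ≤ lam * (4 * ε) := by linarith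
    have h5 : lam * (4 * ε) ≤ 1 * (4 * ε) :=
      mul_le_mul_of_nonneg_right hl1.le (by linarith)
    have htri : dist u (g u) ≤ dist u (x (m+2)) + dist (x (m+2)) (g u) :=
      dist_triangle _ _ _
    have e3 : dist u (x (m+2)) = dist (x (m+2)) u := dist_comm _ _
    linarith
  have h0 : dist u (g u) ≤ 0 := by
    by_contra h
    push_neg at h
    have := key (dist u (g u) / 10) (by linarith)
    linarith
  have huw : u = g u := dist_le_zero.mp h0
  have hmemu := hg u
  rw [← huw] at hmemu
  exact hfix u hmemu
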